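/- There exists a stable matching instance with 6 men, 6 women, and a two-woman coalition {w₁, w₂} of manipulators using truncation manipulations such that the join (each woman getting her less preferred partner) of two individually-achievable feasible matchings is not itself achievable by any truncation manipulation of the coalition; hence the set of feasible matchings need not be a meet-semilattice under the women's preference order. -/

import Mathlib

open List

/-- A stable-matching instance: each agent has a strict preference order
(a duplicate-free list, earlier = more preferred) over a subset of the other side. -/
structure SMInstance (M W : Type*) where
  mpref : M → List W
  wpref : W → List M
  mnodup : ∀ m, (mpref m).Nodup
  wnodup : ∀ w, (wpref w).Nodup

/-- A matching: a pairing of men and women (agents may be unmatched),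
involutive on matched pairs. -/
structure Matching (M W : Type*) where
  μm : M → Option W
  μw : W → Option M
  consistent : ∀ m w, μm m = some w ↔ μw w = some m

section Defs

variable {M W : Type*} [DecidableEq M] [DecidableEq W]

/-- Man `m` strictly prefers woman `w` to the (possibly empty) assignment `o`. -/
def SMInstance.mPref (I : SMInstance M W) (m : M) (w : W) : Option W → Prop
  | some w' => w ∈ I.mpref m ∧ (w' ∉ I.mpref m ∨ (I.mpref m).idxOf w < (I.mpref m).idxOf w')
  | none => w ∈ I.mpref m

/-- Woman `w` strictly prefers man `m` to the (possibly empty) assignment `o`. -/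
def SMInstance.wPref (I : SMInstance M W) (w : W) (m : M) : Option M → Prop
  | some m' => m ∈ I.wpref w ∧ (m' ∉ I.wpref w ∨ (I.wpref w).idxOf m < (I.wpref w).idxOf m')
  | none => m ∈ I.wpref w

/-- Man `m` weakly prefers assignment `o₁` to assignment `o₂`. -/
def SMInstance.mWeak (I : SMInstance M W) (m : M) (o₁ o₂ : Option W) : Prop :=
  o₁ = o₂ ∨ ∃ w, o₁ = some w ∧ I.mPref m w o₂

/-- Woman `w` weakly prefers assignment `o₁` to assignment `o₂`. -/
def SMInstance.wWeak (I : SMInstance M W) (w : W) (o₁ o₂ : Option M) : Prop :=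
  o₁ = o₂ ∨ ∃ m, o₁ = some m ∧ I.wPref w m o₂

def IndivRational (I : SMInstance M W) (μ : Matching M W) : Prop :=
  ∀ m w, μ.μm m = some w → w ∈ I.mpref m ∧ m ∈ I.wpref w

def BlockingPair (I : SMInstance M W) (μ : Matching M W) (m : M) (w : W) : Prop :=
  μ.μm m ≠ some w ∧ I.mPref m w (μ.μm m) ∧ I.wPref w m (μ.μw w)

def IsStable (I : SMInstance M W) (μ : Matching M W) : Prop :=
  IndivRational I μ ∧ ∀ m w, ¬ BlockingPair I μ m w

/-- The men-optimal stable matching (= output of men-proposing Gale–Shapley). -/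
def IsMenOptimal (I : SMInstance M W) (μ : Matching M W) : Prop :=
  IsStable I μ ∧ ∀ μ', IsStable I μ' → ∀ m, I.mWeak m (μ.μm m) (μ'.μm m)

/-- The women-optimal stable matching. -/
def IsWomenOptimal (I : SMInstance M W) (μ : Matching M W) : Prop :=
  IsStable I μ ∧ ∀ μ', IsStable I μ' → ∀ w, I.wWeak w (μ.μw w) (μ'.μw w)

/-- `I'` arises from `I` by arbitrary misreports of the women in `L`
(all men and all women outside `L` are truthful). -/
def GeneralManip (I I' : SMInstance M W) (L : Set W) : Prop :=
  I'.mpref = I.mpref ∧ ∀ w ∉ L, I'.wpref w = I.wpref w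

/-- `I'` arises from `I` by truncation (prefix) misreports of the women in `L`. -/
def TruncManip (I I' : SMInstance M W) (L : Set W) : Prop :=
  GeneralManip I I' L ∧ ∀ w ∈ L, (I'.wpref w) <+: (I.wpref w)

/-- `I'` arises from `I` by permutation misreports of the women in `L`. -/
def PermManip (I I' : SMInstance M W) (L : Set W) : Prop :=
  GeneralManip I I' L ∧ ∀ w ∈ L, (I'.wpref w).Perm (I.wpref w)

/-- Woman `w` is strictly better off in `μ₁` than in `μ₂` (true preferences). -/
def wStrictBetter (I : SMInstance M W) (w : W) (μ₁ μ₂ : Matching M W) : Prop :=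
  ∃ m, μ₁.μw w = some m ∧ I.wPref w m (μ₂.μw w)

/-- The set `δ(w)` of suitors of `w` at matching `μ`: the men who prefer `w`
to their own partner in `μ`. -/
def suitorSet (I : SMInstance M W) (μ : Matching M W) (w : W) : Set M :=
  {m | I.mPref m w (μ.μm m)}

/-- The suitor graph of Kobayashi–Matsui, on vertices `M ⊕ W ⊕ {s}`. -/
inductive SuitorEdge (I : SMInstance M W) (L : Set W) (μ : Matching M W) :
    M ⊕ W ⊕ Unit → M ⊕ W ⊕ Unit → Prop
  | partner_wm (w : W) (m : M) : μ.μw w = some m →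
      SuitorEdge I L μ (Sum.inr (Sum.inl w)) (Sum.inl m)
  | partner_mw (w : W) (m : M) : μ.μw w = some m →
      SuitorEdge I L μ (Sum.inl m) (Sum.inr (Sum.inl w))
  | suitor_manip (w : W) (m : M) : w ∈ L → m ∈ suitorSet I μ w →
      SuitorEdge I L μ (Sum.inl m) (Sum.inr (Sum.inl w))
  | suitor_honest (w : W) (m : M) : w ∉ L → m ∈ suitorSet I μ w →
      (∀ m' ∈ suitorSet I μ w, m' ≠ m → (I.wpref w).idxOf m < (I.wpref w).idxOf m') →
      SuitorEdge I L μ (Sum.inl m) (Sum.inr (Sum.inl w))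
  | fromSource (w : W) : suitorSet I μ w = ∅ →
      SuitorEdge I L μ (Sum.inr (Sum.inr ())) (Sum.inr (Sum.inl w))

/-- Reachability in the suitor graph. -/
abbrev SReach (I : SMInstance M W) (L : Set W) (μ : Matching M W) :
    (M ⊕ W ⊕ Unit) → (M ⊕ W ⊕ Unit) → Prop :=
  Relation.ReflTransGen (SuitorEdge I L μ)

/-- A reduced table (shortlists) for instance `I`: sublists of the true lists,
with mutual membership, where each man is engaged to the head of his reduced list,
each woman to the last man of hers, and every removed man is worse for the woman
than her current partner. -/
structure ReducedTable (I : SMInstance M W) where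
  rm : M → List W
  rw : W → List M
  rmSub : ∀ m, (rm m).Sublist (I.mpref m)
  rwSub : ∀ w, (rw w).Sublist (I.wpref w)
  mem_iff : ∀ m w, w ∈ rm m ↔ m ∈ rw w
  engaged : ∀ m w, (rm m).head? = some w ↔ (rw w).getLast? = some m
  removed_worse : ∀ m w p, m ∈ I.wpref w → m ∉ rw w → (rw w).getLast? = some p →
      (I.wpref w).idxOf p < (I.wpref w).idxOf m

/-- A rotation: a cyclic sequence of (distinct) men `m₀,…,m_{r-1}`
together with their current partners `w₀,…,w_{r-1}`. -/
structure Rot (M W : Type*) where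
  r : ℕ
  hr : 2 ≤ r
  ms : Fin r → M
  ws : Fin r → W
  inj : Function.Injective ms

/-- Cyclic successor of an index of a rotation. -/
def Rot.nxt (R : Rot M W) (i : Fin R.r) : Fin R.r :=
  ⟨((i : ℕ) + 1) % R.r, Nat.mod_lt _ (by have := R.hr; omega)⟩

/-- The reduced list of woman `w` determined by the stable matching `μ`:
the men weakly preferred to her current partner. -/
def reducedListW (I : SMInstance M W) (μ : Matching M W) (w : W) : List M :=
  match μ.μw w with
  | some p => (I.wpref w).filter (fun m => decide ((I.wpref w).idxOf m ≤ (I.wpref w).idxOf p))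
  | none => []

/-- The reduced list of man `m` determined by the stable matching `μ`. -/
def reducedListM (I : SMInstance M W) (μ : Matching M W) (m : M) : List W :=
  (I.mpref m).filter (fun w => decide (m ∈ reducedListW I μ w))

/-- The rotation `R` is exposed in (the reduced table of) the matching `μ`:
`w_i` is first and `w_{i+1}` second on `m_i`'s reduced list. -/
def Exposed (I : SMInstance M W) (μ : Matching M W) (R : Rot M W) : Prop :=
  ∀ i, (reducedListM I μ (R.ms i)).head? = some (R.ws i) ∧
       (reducedListM I μ (R.ms i))[1]? = some (R.ws (R.nxt i))

/-- `μ'` is the matching obtained from `μ` by eliminating the rotation `R`: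
each `m_i` is now matched with `w_{i+1}`, everyone else is unchanged. -/
def ElimStep (R : Rot M W) (μ μ' : Matching M W) : Prop :=
  (∀ i, μ'.μm (R.ms i) = some (R.ws (R.nxt i))) ∧
  ∀ m, (∀ i, m ≠ R.ms i) → μ'.μm m = μ.μm m

/-- `ElimSeq I μ S μ'`: the matching `μ'` is obtained from `μ` by successively
eliminating the (exposed-at-the-time) rotations of the set `S`. -/
inductive ElimSeq (I : SMInstance M W) : Matching M W → Set (Rot M W) → Matching M W → Prop
  | refl (μ : Matching M W) : ElimSeq I μ ∅ μ
  | step {μ μ' μ'' : Matching M W} {R : Rot M W} {S : Set (Rot M W)} :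
      Exposed I μ R → ElimStep R μ μ' → ElimSeq I μ' S μ'' → ElimSeq I μ (insert R S) μ''

/-- The rotation `R` moves man `m` from woman `w` to woman `w'`. -/
def Moves (R : Rot M W) (m : M) (w w' : W) : Prop :=
  ∃ i, R.ms i = m ∧ R.ws i = w ∧ R.ws (R.nxt i) = w'

/-- `R₁` explicitly precedes `R₂`: they share a man `m` such that `R₁` moves `m`
to some woman `w` and `R₂` moves `m` away from `w`. -/
def ExplicitPrec (R₁ R₂ : Rot M W) : Prop :=
  ∃ m w w₁ w₂, Moves R₁ m w₁ w ∧ Moves R₂ m w w₂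

/-- The precedence relation `≺`: transitive closure of explicit precedence. -/
def Prec (R₁ R₂ : Rot M W) : Prop :=
  Relation.TransGen ExplicitPrec R₁ R₂

/-- `R` is a rotation of the instance `I`: it is exposed at some matching
obtained from the men-optimal matching by eliminating rotations. -/
def IsRotOf (I : SMInstance M W) (R : Rot M W) : Prop :=
  ∃ μ0 S μ', IsMenOptimal I μ0 ∧ ElimSeq I μ0 S μ' ∧ Exposed I μ' R

/-- A closed (downward-closed under `≺`) set of rotations of the instance `I`. -/
def IsClosedSet (I : SMInstance M W) (𝓡 : Set (Rot M W)) : Prop :=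
  (∀ R ∈ 𝓡, IsRotOf I R) ∧ ∀ R ∈ 𝓡, ∀ R', IsRotOf I R' → Prec R' R → R' ∈ 𝓡

/-- The closed set `𝓡` can be eliminated: the matching obtained by eliminating it
is stable w.r.t. the true profile and is the men-optimal stable matching of some
profile in which only the women of `L` misreport. -/
def CanEliminate (I : SMInstance M W) (L : Set W) (𝓡 : Set (Rot M W)) : Prop :=
  ∃ μ0 μ', IsMenOptimal I μ0 ∧ ElimSeq I μ0 𝓡 μ' ∧ IsStable I μ' ∧
    ∃ I', GeneralManip I I' L ∧ IsMenOptimal I' μ'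

/-- `R` is a maximal rotation of the set `𝓡`. -/
def MaxRot (𝓡 : Set (Rot M W)) (R : Rot M W) : Prop :=
  R ∈ 𝓡 ∧ ∀ R' ∈ 𝓡, ¬ Prec R R'

/-- Whether man `m` proposes to woman `w` in the men-proposing Gale–Shapley run
whose outcome is `μ` (he proposes to every woman he weakly prefers to his final partner). -/
def proposedToB (I : SMInstance M W) (μ : Matching M W) (m : M) (w : W) : Bool :=
  decide (w ∈ I.mpref m) &&
    (match μ.μm m with
     | none => true
     | some w' => decide ((I.mpref m).idxOf w ≤ (I.mpref m).idxOf w'))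

/-- The proposal list `Pro(w)`: all men who proposed to `w`, ordered as in her stated list. -/
def proposals (I : SMInstance M W) (μ : Matching M W) (w : W) : List M :=
  (I.wpref w).filter (fun m => proposedToB I μ m w)

/-- `μ` is feasible for the permutation-manipulation game of coalition `L`. -/
def FeasibleM (I : SMInstance M W) (L : Set W) (μ : Matching M W) : Prop :=
  IsStable I μ ∧ ∃ I', PermManip I I' L ∧ IsMenOptimal I' μ

/-- `μ` is Pareto-optimal among feasible matchings (for the women). -/
def ParetoOptimal (I : SMInstance M W) (L : Set W) (μ : Matching M W) : Prop :=
  FeasibleM I L μ ∧ ¬∃ μ', FeasibleM I L μ' ∧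
    (∀ w, I.wWeak w (μ'.μw w) (μ.μw w)) ∧ (∃ w, wStrictBetter I w μ' μ)

/-- The reported profile `I'` with induced matching `μ` is a super-strong Nash
equilibrium of the permutation-manipulation game under the feasibility assumption. -/
def SuperStrongNE (I : SMInstance M W) (L : Set W) (I' : SMInstance M W)
    (μ : Matching M W) : Prop :=
  PermManip I I' L ∧ IsMenOptimal I' μ ∧ IsStable I μ ∧
  ∀ (Ls : Set W), Ls ⊆ L → ∀ I'' μ'',
    PermManip I I'' L → (∀ w ∉ Ls, I''.wpref w = I'.wpref w) →
    IsMenOptimal I'' μ'' → IsStable I μ'' →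
    ¬((∀ l ∈ Ls, I.wWeak l (μ''.μw l) (μ.μw l)) ∧ ∃ l ∈ Ls, wStrictBetter I l μ'' μ)

end Defs

/-!
Agents are numbered from `0`: man `i` and woman `i` below are `mᵢ₊₁` and `wᵢ₊₁`.

Truncating `w₁`'s list to her first choice yields `μ₁`, truncating `w₂`'s yields `μ₂`, and in
their join both women are matched with the last man on their true lists. A truncation that keeps
the last man is the whole list, so the join could only be the men-optimal matching of the
truthful profile; but there every man gets his first choice, which `m₃` and `m₄` do not in the
join. Men-optimality in the truncated profiles is checked by enumerating all individually
rational man-side assignments.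
-/

section Decidability

variable {M W : Type*} [DecidableEq M] [DecidableEq W]

instance (I : SMInstance M W) (m : M) (w : W) : ∀ o, Decidable (I.mPref m w o)
  | some _ => inferInstanceAs (Decidable (_ ∧ _))
  | none => inferInstanceAs (Decidable (_ ∈ _))

instance (I : SMInstance M W) (w : W) (m : M) : ∀ o, Decidable (I.wPref w m o)
  | some _ => inferInstanceAs (Decidable (_ ∧ _))
  | none => inferInstanceAs (Decidable (_ ∈ _))

instance (I : SMInstance M W) (m : M) (o₁ o₂ : Option W) : Decidable (I.mWeak m o₁ o₂) :=
  inferInstanceAs (Decidable (_ ∨ _))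

instance (I : SMInstance M W) (w : W) (o₁ o₂ : Option M) : Decidable (I.wWeak w o₁ o₂) :=
  inferInstanceAs (Decidable (_ ∨ _))

instance [Fintype M] [Fintype W] (I : SMInstance M W) (μ : Matching M W) :
    Decidable (IndivRational I μ) :=
  inferInstanceAs (Decidable (∀ _ _, _))

instance (I : SMInstance M W) (μ : Matching M W) (m : M) (w : W) :
    Decidable (BlockingPair I μ m w) :=
  inferInstanceAs (Decidable (_ ∧ _))

instance [Fintype M] [Fintype W] (I : SMInstance M W) (μ : Matching M W) :
    Decidable (IsStable I μ) :=
  inferInstanceAs (Decidable (_ ∧ _))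

end Decidability

theorem List.IsPrefix.eq_of_getLast_mem {α : Type*} {l₁ l₂ : List α} {x : α} (h : l₁ <+: l₂)
    (hl₂ : l₂.Nodup) (hx : l₂.getLast? = some x) (hx₁ : x ∈ l₁) : l₁ = l₂ := by
  obtain ⟨t, rfl⟩ := h
  rcases t.eq_nil_or_concat with rfl | ⟨t', y, rfl⟩
  · exact (List.append_nil l₁).symm
  · have hxy : x = y := by simpa [← List.append_assoc] using hx.symm
    exact absurd hxy ((List.nodup_append.mp hl₂).2.2 x hx₁ y (by simp))

namespace SMInstance

variable {M W : Type*}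

theorem ext_pref {I J : SMInstance M W} (hm : I.mpref = J.mpref) (hw : I.wpref = J.wpref) :
    I = J := by
  cases I; cases J; cases hm; cases hw; rfl

variable [DecidableEq W]

def truncate (I : SMInstance M W) (w : W) (k : ℕ) : SMInstance M W where
  mpref := I.mpref
  wpref := Function.update I.wpref w ((I.wpref w).take k)
  mnodup := I.mnodup
  wnodup w' := by
    rcases eq_or_ne w' w with rfl | hw
    · simpa using (I.wnodup w').sublist (List.take_sublist k _)
    · simpa [hw] using I.wnodup w'

theorem truncManip_truncate (I : SMInstance M W) (w : W) (k : ℕ) :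
    TruncManip I (I.truncate w k) {w} :=
  ⟨⟨rfl, fun w' hw' => by simp [truncate, Function.update_of_ne hw']⟩,
    fun w' hw' => by simp [Set.mem_singleton_iff.mp hw', truncate, List.take_prefix]⟩

end SMInstance

theorem TruncManip.eq_of_matched_last {M W : Type*} [DecidableEq M] [DecidableEq W]
    {I I' : SMInstance M W} {L : Set W} {μ : Matching M W} (h : TruncManip I I' L)
    (hμ : IndivRational I' μ)
    (hlast : ∀ w ∈ L, ∃ m, (I.wpref w).getLast? = some m ∧ μ.μm m = some w) : I' = I := by
  obtain ⟨⟨hm, hw⟩, hpre⟩ := h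
  refine SMInstance.ext_pref hm (funext fun w => ?_)
  by_cases hwL : w ∈ L
  · obtain ⟨m, hlast, hmw⟩ := hlast w hwL
    exact (hpre w hwL).eq_of_getLast_mem (I.wnodup w) hlast (hμ m w hmw).2
  · exact hw w hwL

namespace Matching

theorem ext_μm {M W : Type*} {μ μ' : Matching M W} (h : μ.μm = μ'.μm) : μ = μ' := by
  obtain ⟨f, g, hfg⟩ := μ
  obtain ⟨f', g', hfg'⟩ := μ'
  obtain rfl : f = f' := h
  obtain rfl : g = g' := by
    funext w
    cases hw : g w with
    | none => cases hw' : g' w with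
      | none => rfl
      | some m =>
        have := (hfg m w).mp ((hfg' m w).mpr hw')
        simp [hw] at this
    | some m => exact (((hfg' m w).mp ((hfg m w).mpr hw))).symm
  rfl

theorem μm_eq_or_eq_none {M W : Type*} (μ : Matching M W) (m m' : M) (h : μ.μm m = μ.μm m') :
    μ.μm m = none ∨ m = m' := by
  cases hm : μ.μm m with
  | none => exact .inl rfl
  | some w =>
    refine .inr (Option.some.inj ?_)
    rw [← (μ.consistent m w).mp hm, ← (μ.consistent m' w).mp (h ▸ hm)]

variable {n : ℕ} {W : Type*} [DecidableEq W]

def ofMen (f : Fin n → Option W) (hf : ∀ m m', f m = f m' → f m = none ∨ m = m') :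
    Matching (Fin n) W where
  μm := f
  μw w := (List.finRange n).find? (f · = some w)
  consistent m w := by
    constructor
    · intro hm
      cases hfind : (List.finRange n).find? (f · = some w) with
      | none => simpa [hm] using List.find?_eq_none.mp hfind m (List.mem_finRange m)
      | some m' =>
        have hm' : f m' = some w := by simpa using List.find?_some hfind
        rcases hf m' m (hm'.trans hm.symm) with h | rfl
        · simp [hm'] at h
        · rfl
    · intro hfind
      simpa using List.find?_some hfind

theorem ofMen_μm (μ : Matching (Fin n) W) : ofMen μ.μm μ.μm_eq_or_eq_none = μ :=
  ext_μm rfl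

end Matching

section MenOptimal

variable {n : ℕ} {W : Type*}

def manAssignments (I : SMInstance (Fin n) W) : List (List (Option W)) :=
  (List.ofFn fun m => none :: (I.mpref m).map some).sections

theorem ofFn_μm_mem_manAssignments {I : SMInstance (Fin n) W} {μ : Matching (Fin n) W}
    (hμ : IndivRational I μ) : List.ofFn μ.μm ∈ manAssignments I := by
  rw [manAssignments, List.mem_sections, List.forall₂_iff_get]
  refine ⟨by simp, fun i _ _ => ?_⟩
  simp only [List.get_eq_getElem, List.getElem_ofFn]
  cases hm : μ.μm ⟨i, _⟩ with
  | none => exact List.mem_cons_self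
  | some w => exact List.mem_cons_of_mem _ (List.mem_map_of_mem (hμ _ w hm).1)

theorem isMenOptimal_of_forall_manAssignments [DecidableEq W] {I : SMInstance (Fin n) W}
    {μ : Matching (Fin n) W} (hμ : IsStable I μ)
    (h : ∀ l ∈ manAssignments I, ∀ hl, IsStable I (Matching.ofMen (l.getD · none) hl) →
      ∀ m, I.mWeak m (μ.μm m) (l.getD m none)) :
    IsMenOptimal I μ := by
  refine ⟨hμ, fun μ' hμ' m => ?_⟩
  have hget (m : Fin n) : (List.ofFn μ'.μm).getD m none = μ'.μm m := by simp
  have key := h _ (ofFn_μm_mem_manAssignments hμ'.1)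
  simp only [hget] at key
  exact key μ'.μm_eq_or_eq_none (by rwa [Matching.ofMen_μm]) m

end MenOptimal

namespace NoMeet

def I : SMInstance (Fin 6) (Fin 6) where
  mpref := ![[0, 2, 4], [1, 2, 5], [2, 3], [3, 2], [4, 0], [5, 1]]
  wpref := ![[4, 0], [5, 1], [3, 1, 0, 2], [2, 3], [0, 4], [1, 5]]
  mnodup := by decide
  wnodup := by decide

def μ₁ : Matching (Fin 6) (Fin 6) :=
  .ofMen ![some 4, some 1, some 3, some 2, some 0, some 5] (by decide)

def μ₂ : Matching (Fin 6) (Fin 6) :=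
  .ofMen ![some 0, some 5, some 3, some 2, some 4, some 1] (by decide)

def μJoin : Matching (Fin 6) (Fin 6) :=
  .ofMen ![some 0, some 1, some 3, some 2, some 4, some 5] (by decide)

def μDiag : Matching (Fin 6) (Fin 6) :=
  .ofMen (fun m => some m) (by decide)

theorem isMenOptimal_μ₁ : IsMenOptimal (I.truncate 0 1) μ₁ :=
  isMenOptimal_of_forall_manAssignments (by decide +kernel) (by decide +kernel)

theorem isMenOptimal_μ₂ : IsMenOptimal (I.truncate 1 1) μ₂ :=
  isMenOptimal_of_forall_manAssignments (by decide +kernel) (by decide +kernel)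

theorem not_isMenOptimal_μJoin : ¬ IsMenOptimal I μJoin :=
  -- `μDiag` gives every man his first choice (and is stable); `μJoin` does not.
  fun h => absurd (h.2 μDiag (by decide) 2) (by decide)

end NoMeet

/-- there is a 6×6 instance with a two-woman coalition of truncation
manipulators in which the women-join (each woman getting her less preferred
partner) of two individually-achievable feasible matchings is not achievable by
any truncation manipulation of the coalition: the set of feasible matchings need
not be a meet-semilattice. -/
theorem no_meet_semilattice :
    ∃ (I : SMInstance (Fin 6) (Fin 6)) (w₁ w₂ : Fin 6), w₁ ≠ w₂ ∧
      ∃ μ₁ μ₂ μv : Matching (Fin 6) (Fin 6),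
        (∃ I₁, TruncManip I I₁ {w₁} ∧ IsMenOptimal I₁ μ₁ ∧ IsStable I μ₁) ∧
        (∃ I₂, TruncManip I I₂ {w₂} ∧ IsMenOptimal I₂ μ₂ ∧ IsStable I μ₂) ∧
        (∀ w, (μv.μw w = μ₁.μw w ∨ μv.μw w = μ₂.μw w) ∧
          I.wWeak w (μ₁.μw w) (μv.μw w) ∧ I.wWeak w (μ₂.μw w) (μv.μw w)) ∧
        ¬∃ I' : SMInstance (Fin 6) (Fin 6),
          TruncManip I I' {w₁, w₂} ∧ IsMenOptimal I' μv := by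
  refine ⟨NoMeet.I, 0, 1, by decide, NoMeet.μ₁, NoMeet.μ₂, NoMeet.μJoin,
    ⟨_, NoMeet.I.truncManip_truncate 0 1, NoMeet.isMenOptimal_μ₁, by decide⟩,
    ⟨_, NoMeet.I.truncManip_truncate 1 1, NoMeet.isMenOptimal_μ₂, by decide⟩, by decide, ?_⟩
  rintro ⟨I', hI', hopt⟩
  obtain rfl : I' = NoMeet.I := hI'.eq_of_matched_last hopt.1.1 (by decide)
  exact NoMeet.not_isMenOptimal_μJoin hopt
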